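/- arXiv:2308.15000 — 6 statements merged into one kernel-verified Lean document; each statement's English description precedes it below -/
import Mathlib

section
/- For every natural number m ≥ 1, the maximum over b ∈ [1..m] of min((b+1)/m, 1/b) equals min((⌊√m⌋+1)/m, 1/⌊√m⌋). -/
theorem stmt_0 (m : ℕ) (hm : 1 ≤ m) :
    IsGreatest
      ((fun b : ℕ => min ((b + 1 : ℝ) / m) (1 / (b : ℝ))) '' (Set.Icc 1 m))
      (min ((⌊Real.sqrt m⌋₊ + 1 : ℝ) / m) (1 / (⌊Real.sqrt m⌋₊ : ℝ))) := by
  have hfloor : ⌊Real.sqrt m⌋₊ = Nat.sqrt m := Real.nat_floor_real_sqrt_eq_nat_sqrt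
  rw [hfloor]
  set s := Nat.sqrt m with hs
  have hs1 : 1 ≤ s := Nat.sqrt_pos.mpr hm
  have hsm : s ≤ m := Nat.sqrt_le_self m
  have hmR : (0:ℝ) < m := by exact_mod_cast hm
  have hsR : (0:ℝ) < s := by exact_mod_cast hs1
  have hsq : (s:ℝ) * s ≤ m := by exact_mod_cast Nat.sqrt_le m
  have hsq2 : (m:ℝ) < (s+1) * (s+1) := by exact_mod_cast Nat.lt_succ_sqrt m
  constructor
  · exact ⟨s, ⟨hs1, hsm⟩, rfl⟩
  · rintro x ⟨b, ⟨hb1, hbm⟩, rfl⟩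
    have hbR : (0:ℝ) < b := by exact_mod_cast hb1
    rcases lt_trichotomy b s with h | h | h
    · refine le_trans (min_le_left _ _) (le_min ?_ ?_)
      · gcongr
      · rw [div_le_div_iff₀ hmR hsR]
        have : (b:ℝ) + 1 ≤ s := by exact_mod_cast h
        nlinarith
    · subst h; exact le_refl _
    · refine le_trans (min_le_right _ _) (le_min ?_ ?_)
      · rw [div_le_div_iff₀ hbR hmR]
        have : (s:ℝ) + 1 ≤ b := by exact_mod_cast h
        nlinarith
      · exact one_div_le_one_div_of_le hsR (by exact_mod_cast Nat.le_of_lt h)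
end

section
/- For every natural number m ≥ 2 that is not a perfect square, the maximum over positive integers b of min((b+1)/m, 1/b) is attained at b = ⌊√m⌋. -/
theorem stmt_4 (m : ℕ) (hm : 2 ≤ m) (hsq : ¬ ∃ k : ℕ, k * k = m) :
    ⌊Real.sqrt m⌋₊ ∈ Set.Icc 1 m ∧
    ∀ b ∈ Set.Icc 1 m,
      min ((b + 1 : ℝ) / m) (1 / (b : ℝ)) ≤
        min ((⌊Real.sqrt m⌋₊ + 1 : ℝ) / m) (1 / (⌊Real.sqrt m⌋₊ : ℝ)) := by
  have hfloor : ⌊Real.sqrt m⌋₊ = Nat.sqrt m := Real.nat_floor_real_sqrt_eq_nat_sqrt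
  rw [hfloor]
  set s := Nat.sqrt m with hs
  have hslt : s * s < m := lt_of_le_of_ne (by simpa [pow_two] using Nat.sqrt_le' m) (fun h => hsq ⟨s, h⟩)
  have hmlt : m < (s + 1) * (s + 1) := by simpa [pow_two, Nat.succ_eq_add_one] using Nat.lt_succ_sqrt' m
  have hs1 : 1 ≤ s := by nlinarith
  have hsm : s ≤ m := Nat.sqrt_le_self m
  have hm0 : (0:ℝ) < m := by positivity
  have hsR : (0:ℝ) < s := by exact_mod_cast hs1
  refine ⟨⟨hs1, hsm⟩, ?_⟩
  rintro b ⟨hb1, hbm⟩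
  have hbR : (0:ℝ) < b := by exact_mod_cast hb1
  rcases lt_trichotomy b s with h | h | h
  · have hbs : (b:ℝ) ≤ s := by exact_mod_cast h.le
    apply le_min
    · refine (min_le_left _ _).trans ?_
      apply div_le_div_of_nonneg_right (by linarith) hm0.le
    · -- (b+1)/m ≤ 1/s since (b+1)*s ≤ s*s < m
      refine (min_le_left _ _).trans ?_
      rw [div_le_div_iff₀ hm0 hsR]
      have hbs' : (b:ℝ) + 1 ≤ s := by exact_mod_cast h
      have hss : (s:ℝ) * s < m := by exact_mod_cast hslt
      nlinarith
  · subst h; exact le_refl _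
  · apply le_min
    · -- 1/b ≤ (s+1)/m
      refine (min_le_right _ _).trans ?_
      rw [div_le_div_iff₀ hbR hm0]
      have : (m:ℝ) ≤ (s+1) * b := by
        have hb' : s + 1 ≤ b := h
        have : ((s+1) * (s+1) : ℕ) ≤ (s+1) * b := Nat.mul_le_mul_left _ hb'
        have := hmlt.le.trans this
        exact_mod_cast this
      linarith
    · -- 1/b ≤ 1/s
      refine (min_le_right _ _).trans ?_
      apply one_div_le_one_div_of_le hsR
      exact_mod_cast h.le
end

section
/- Let D be an m × x matrix with entries in {0,1} such that D^T D has all entries nonzero (data locality), and let s ∈ ℝ^x be a vector with nonnegative entries summing to 1. Suppose there exists a column j of D with at most b ones (i.e., data group j lies on at most b machines), where 1 ≤ b ≤ m. Then max_i (D s)_i ≥ 1/b. -/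
theorem stmt_5 (m x : ℕ) (D : Matrix (Fin m) (Fin x) ℝ)
    (hD : ∀ i j, D i j = 0 ∨ D i j = 1)
    (hloc : ∀ j k, (D.transpose * D) j k ≠ 0)
    (s : Fin x → ℝ) (hs : ∀ j, 0 ≤ s j) (hsum : ∑ j, s j = 1)
    (b : ℕ) (hb1 : 1 ≤ b) (hbm : b ≤ m)
    (j : Fin x)
    (hcol : (Finset.univ.filter (fun i => D i j = 1)).card ≤ b) :
    ∃ i, (1 : ℝ) / b ≤ D.mulVec s i := by
  classical
  set T := Finset.univ.filter (fun i => D i j = 1) with hT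
  -- T is nonempty
  have hjj := hloc j j
  have hmul : ∀ k, ∃ i ∈ T, D i k = 1 := by
    intro k
    have h := hloc j k
    by_contra hc
    push_neg at hc
    apply h
    simp only [Matrix.mul_apply, Matrix.transpose_apply]
    apply Finset.sum_eq_zero
    intro i _
    rcases hD i j with h0 | h1
    · rw [h0, zero_mul]
    · have : i ∈ T := by simp [hT, h1]
      rcases hD i k with h0' | h1'
      · rw [h0', mul_zero]
      · exact absurd h1' (hc i this)
  obtain ⟨i0, hi0, _⟩ := hmul j
  have hTne : T.Nonempty := ⟨i0, hi0⟩
  -- sum over T of (D.mulVec s) ≥ 1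
  have hkey : (1 : ℝ) ≤ ∑ i ∈ T, D.mulVec s i := by
    have : ∑ i ∈ T, D.mulVec s i = ∑ k, (∑ i ∈ T, D i k) * s k := by
      simp only [Matrix.mulVec, dotProduct]
      rw [Finset.sum_comm]
      simp [Finset.sum_mul]
    rw [this, ← hsum]
    apply Finset.sum_le_sum
    intro k _
    have ⟨i, hiT, hik⟩ := hmul k
    have h1 : (1 : ℝ) ≤ ∑ i ∈ T, D i k := by
      have : ∑ i ∈ T, D i k ≥ ∑ i ∈ {i}, D i k := by
        apply Finset.sum_le_sum_of_subset_of_nonneg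
        · simpa using hiT
        · intro l _ _
          rcases hD l k with h0 | h1 <;> simp [*]
      simpa [hik] using this
    nlinarith [hs k, mul_le_mul_of_nonneg_right h1 (hs k)]
  -- pigeonhole
  by_contra hc
  push_neg at hc
  have hsumlt : ∑ i ∈ T, D.mulVec s i < ∑ i ∈ T, (1 : ℝ) / b := by
    exact Finset.sum_lt_sum_of_nonempty hTne (fun i _ => hc i)
  have hb0 : (0 : ℝ) < b := by exact_mod_cast hb1
  have : ∑ i ∈ T, (1 : ℝ) / b = T.card * (1 / b) := by
    simp [Finset.sum_const, mul_comm]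
  rw [this] at hsumlt
  have hcard : (T.card : ℝ) ≤ b := by exact_mod_cast hcol
  have : (T.card : ℝ) * (1 / b) ≤ 1 := by
    rw [mul_one_div, div_le_one hb0]; exact hcard
  linarith
end

section
/- Let D be an m × x zero-one matrix such that D^T D has all entries positive, and let s ∈ ℝ^x have nonnegative entries summing to 1. Then for every integer b with 1 ≤ b ≤ m, max_i (D s)_i ≥ min((b+1)/m, 1/b). -/
/-!
Let `S_k` be the set of machines storing group `k`. If some `S_j` has at most `b` machines, then
every group shares a machine with `j`, so the loads on `S_j` add up to at least `∑ s = 1` and one of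
the at most `b` machines carries `1 / b`. Otherwise every group sits on at least `b + 1` machines,
the total load is at least `b + 1`, and one of the `m` machines carries `(b + 1) / m`.
-/

open Finset Matrix

theorem Finset.exists_div_card_le_of_le_sum {ι : Type*} {S : Finset ι} {f : ι → ℝ} {c : ℝ}
    (hc : 0 < c) (h : c ≤ ∑ i ∈ S, f i) : ∃ i ∈ S, c / #S ≤ f i := by
  have hS : S.Nonempty := by
    by_contra hS
    rw [not_nonempty_iff_eq_empty.mp hS, sum_empty] at h
    exact hc.not_ge h
  refine exists_le_of_sum_le hS ?_
  rwa [sum_const, nsmul_eq_mul, mul_div_cancel₀ _ (by exact_mod_cast hS.card_pos.ne')]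

namespace Matrix

variable {ι κ : Type*} {D : Matrix ι κ ℝ}

noncomputable def colSupport [Fintype ι] (D : Matrix ι κ ℝ) (k : κ) : Finset ι := {i | D i k = 1}

@[simp]
theorem mem_colSupport [Fintype ι] {i : ι} {k : κ} : i ∈ D.colSupport k ↔ D i k = 1 := by
  simp [colSupport]

theorem sum_col_eq_card_colSupport [Fintype ι] (hD : ∀ i k, D i k = 0 ∨ D i k = 1) (k : κ) :
    ∑ i, D i k = #(D.colSupport k) := by
  rw [colSupport, ← sum_boole]
  refine sum_congr rfl fun i _ => ?_
  rcases hD i k with h | h <;> simp [h]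

theorem exists_one_one_of_pos_transpose_mul [Fintype ι] (hD : ∀ i k, D i k = 0 ∨ D i k = 1)
    {j k : κ} (h : 0 < (Dᵀ * D) j k) : ∃ i, D i j = 1 ∧ D i k = 1 := by
  obtain ⟨i, -, hi⟩ := exists_ne_zero_of_sum_ne_zero (mul_apply (M := Dᵀ) ▸ h.ne')
  rw [transpose_apply, mul_ne_zero_iff] at hi
  exact ⟨i, (hD i j).resolve_left hi.1, (hD i k).resolve_left hi.2⟩

theorem one_le_sum_colSupport [Fintype ι] (hD : ∀ i k, D i k = 0 ∨ D i k = 1) {j k : κ}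
    (h : 0 < (Dᵀ * D) j k) : 1 ≤ ∑ i ∈ D.colSupport j, D i k := by
  obtain ⟨i, hij, hik⟩ := exists_one_one_of_pos_transpose_mul hD h
  have hnonneg : ∀ i ∈ D.colSupport j, 0 ≤ D i k := fun i _ => by
    rcases hD i k with h | h <;> simp [h]
  exact hik ▸ single_le_sum hnonneg (mem_colSupport.mpr hij)

theorem le_sum_mulVec [Fintype κ] {s : κ → ℝ} (hs : ∀ k, 0 ≤ s k) (hsum : ∑ k, s k = 1)
    {S : Finset ι} {c : ℝ} (h : ∀ k, c ≤ ∑ i ∈ S, D i k) : c ≤ ∑ i ∈ S, (D *ᵥ s) i :=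
  calc c = ∑ k, s k * c := by rw [← sum_mul, hsum, one_mul]
    _ ≤ ∑ k, s k * ∑ i ∈ S, D i k := sum_le_sum fun k _ => mul_le_mul_of_nonneg_left (h k) (hs k)
    _ = ∑ i ∈ S, (D *ᵥ s) i := by
      simp only [mulVec, dotProduct, mul_sum]
      rw [sum_comm]
      exact sum_congr rfl fun i _ => sum_congr rfl fun k _ => mul_comm _ _

end Matrix

theorem stmt_7_general (m x : ℕ) (D : Matrix (Fin m) (Fin x) ℝ)
    (hD : ∀ i j, D i j = 0 ∨ D i j = 1)
    (hloc : ∀ j k, 0 < (D.transpose * D) j k)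
    (s : Fin x → ℝ) (hs : ∀ j, 0 ≤ s j) (hsum : ∑ j, s j = 1)
    (b : ℕ) :
    ∃ i, min ((b + 1 : ℝ) / m) (1 / (b : ℝ)) ≤ D.mulVec s i := by
  by_cases hsmall : ∃ j, #(D.colSupport j) ≤ b
  · obtain ⟨j, hj⟩ := hsmall
    obtain ⟨i, -, hi⟩ := exists_div_card_le_of_le_sum one_pos
      (le_sum_mulVec hs hsum fun k => one_le_sum_colSupport hD (hloc j k))
    have hcard : 0 < #(D.colSupport j) := by
      obtain ⟨i, hij, -⟩ := exists_one_one_of_pos_transpose_mul hD (hloc j j)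
      exact card_pos.mpr ⟨i, mem_colSupport.mpr hij⟩
    refine ⟨i, (min_le_right _ _).trans (le_trans ?_ hi)⟩
    exact one_div_le_one_div_of_le (by exact_mod_cast hcard) (by exact_mod_cast hj)
  · simp only [not_exists, not_le] at hsmall
    have hload : ∀ k, (b + 1 : ℝ) ≤ ∑ i, D i k := fun k => by
      rw [sum_col_eq_card_colSupport hD]
      exact_mod_cast hsmall k
    obtain ⟨i, -, hi⟩ := exists_div_card_le_of_le_sum (by positivity) (le_sum_mulVec hs hsum hload)
    rw [card_univ, Fintype.card_fin] at hi
    exact ⟨i, (min_le_left _ _).trans hi⟩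

theorem stmt_7 (m x : ℕ) (D : Matrix (Fin m) (Fin x) ℝ)
    (hD : ∀ i j, D i j = 0 ∨ D i j = 1)
    (hloc : ∀ j k, 0 < (D.transpose * D) j k)
    (s : Fin x → ℝ) (hs : ∀ j, 0 ≤ s j) (hsum : ∑ j, s j = 1)
    (b : ℕ) (hb1 : 1 ≤ b) (hbm : b ≤ m) :
    ∃ i, min ((b + 1 : ℝ) / m) (1 / (b : ℝ)) ≤ D.mulVec s i :=
  stmt_7_general m x D hD hloc s hs hsum b
end

section
/- Let D be an m × x zero-one matrix with D^T D having all entries positive, and s ∈ ℝ^x nonnegative with entries summing to 1. Then max_i (D s)_i ≥ min((⌊√m⌋+1)/m, 1/⌊√m⌋). -/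
theorem stmt_8 (m x : ℕ) (hm : 1 ≤ m) (D : Matrix (Fin m) (Fin x) ℝ)
    (hD : ∀ i j, D i j = 0 ∨ D i j = 1)
    (hloc : ∀ j k, 0 < (D.transpose * D) j k)
    (s : Fin x → ℝ) (hs : ∀ j, 0 ≤ s j) (hsum : ∑ j, s j = 1) :
    ∃ i, min ((⌊Real.sqrt m⌋₊ + 1 : ℝ) / m) (1 / (⌊Real.sqrt m⌋₊ : ℝ)) ≤
      D.mulVec s i := by
  set r : ℕ := ⌊Real.sqrt m⌋₊ with hr
  have hm0 : (0:ℝ) < m := by exact_mod_cast hm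
  have hr1 : 1 ≤ r := by
    rw [hr]
    exact Nat.le_floor (by
      have : (1:ℝ) ≤ m := by exact_mod_cast hm
      have := Real.one_le_sqrt.mpr this
      simpa using this)
  have hrpos : (0:ℝ) < r := by exact_mod_cast hr1
  have hne : (Finset.univ : Finset (Fin m)).Nonempty := by
    have : Nonempty (Fin m) := Fin.pos_iff_nonempty.mp hm
    exact Finset.univ_nonempty
  obtain ⟨i₀, -, hi₀⟩ := Finset.exists_max_image Finset.univ (D.mulVec s) hne
  refine ⟨i₀, ?_⟩
  set L := D.mulVec s i₀ with hL
  by_cases hcase : 1 / (r:ℝ) ≤ L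
  · exact le_trans (min_le_right _ _) hcase
  push_neg at hcase
  refine le_trans (min_le_left _ _) ?_
  rw [div_le_iff₀ hm0]
  have hDnn : ∀ i j, 0 ≤ D i j := fun i j => by rcases hD i j with h | h <;> simp [h]
  have hLnn : ∀ i, D.mulVec s i ≤ L := fun i => hi₀ i (Finset.mem_univ i)
  have hDD : ∀ j k, (1:ℝ) ≤ (D.transpose * D) j k := by
    intro j k
    have h := hloc j k
    rw [Matrix.mul_apply] at h ⊢
    by_contra hlt
    push_neg at hlt
    obtain ⟨i, -, hi⟩ := Finset.exists_lt_of_sum_lt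
      (show ∑ _i : Fin m, (0:ℝ) < ∑ i, D.transpose j i * D i k by simpa using h)
    have h1 : D.transpose j i * D i k = 1 := by
      simp only [Matrix.transpose_apply] at hi ⊢
      rcases hD i j with h' | h' <;> rcases hD i k with h'' | h'' <;>
        simp [h', h''] at hi ⊢
    have h2 : (1:ℝ) ≤ ∑ i, D.transpose j i * D i k := by
      rw [← h1]
      exact Finset.single_le_sum
        (fun i _ => mul_nonneg (by simp [Matrix.transpose_apply, hDnn]) (hDnn i k))
        (Finset.mem_univ i)
    exact absurd h2 (not_le.mpr hlt)
  have hc : ∀ j : Fin x, ((r:ℝ) + 1) ≤ ∑ i, D i j := by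
    intro j
    have key : (1:ℝ) ≤ ∑ i, D i j * D.mulVec s i := by
      have heq : ∑ i, D i j * D.mulVec s i = ∑ k, (D.transpose * D) j k * s k := by
        simp only [Matrix.mulVec, dotProduct, Matrix.mul_apply,
          Matrix.transpose_apply, Finset.mul_sum, Finset.sum_mul]
        rw [Finset.sum_comm]
        refine Finset.sum_congr rfl fun k _ => Finset.sum_congr rfl fun i _ => by ring
      rw [heq, ← hsum]
      exact Finset.sum_le_sum fun k _ => le_mul_of_one_le_left (hs k) (hDD j k)
    have hub : ∑ i, D i j * D.mulVec s i ≤ (∑ i, D i j) * L := by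
      rw [Finset.sum_mul]
      exact Finset.sum_le_sum fun i _ => mul_le_mul_of_nonneg_left (hLnn i) (hDnn i j)
    have h1 : (1:ℝ) ≤ (∑ i, D i j) * L := le_trans key hub
    have hcnn : 0 ≤ ∑ i, D i j := Finset.sum_nonneg fun i _ => hDnn i j
    have hcpos : 0 < ∑ i, D i j := by
      rcases lt_or_eq_of_le hcnn with h | h
      · exact h
      · rw [← h, zero_mul] at h1; linarith
    have hgt : (r:ℝ) < ∑ i, D i j := by
      by_contra h
      push_neg at h
      have s1 : (∑ i, D i j) * L < (∑ i, D i j) * (1 / r) :=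
        mul_lt_mul_of_pos_left hcase hcpos
      have s2 : (∑ i, D i j) * (1 / r) ≤ (r:ℝ) * (1 / r) :=
        mul_le_mul_of_nonneg_right h (by positivity)
      rw [mul_one_div_cancel hrpos.ne'] at s2
      linarith
    -- integrality
    have hnat : ∑ i, D i j =
        ((Finset.univ.filter fun i => D i j = 1).card : ℝ) := by
      rw [← Finset.sum_boole]
      refine Finset.sum_congr rfl fun i _ => ?_
      rcases hD i j with h' | h' <;> simp [h']
    rw [hnat] at hgt ⊢
    have : r < (Finset.univ.filter fun i => D i j = 1).card := by exact_mod_cast hgt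
    have : r + 1 ≤ (Finset.univ.filter fun i => D i j = 1).card := this
    exact_mod_cast this
  -- conclude
  have step1 : ((r:ℝ) + 1) ≤ ∑ i, D.mulVec s i := by
    have e : ∑ i, D.mulVec s i = ∑ j, (∑ i, D i j) * s j := by
      simp only [Matrix.mulVec, dotProduct, Finset.sum_mul]
      rw [Finset.sum_comm]
    rw [e]
    calc ((r:ℝ) + 1) = ∑ j, ((r:ℝ) + 1) * s j := by
          rw [← Finset.mul_sum, hsum, mul_one]
      _ ≤ ∑ j, (∑ i, D i j) * s j :=
          Finset.sum_le_sum fun j _ => mul_le_mul_of_nonneg_right (hc j) (hs j)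
  have step2 : ∑ i, D.mulVec s i ≤ (m:ℝ) * L := by
    calc ∑ i, D.mulVec s i ≤ ∑ _i : Fin m, L := Finset.sum_le_sum fun i _ => hLnn i
      _ = (m:ℝ) * L := by simp [mul_comm]
  calc ((r:ℕ):ℝ) + 1 ≤ (m:ℝ) * L := le_trans step1 step2
    _ = L * m := mul_comm _ _
end

section
/- Let (v, k, r, λ, m) be parameters of a balanced incomplete block design with λ = 1, so that vr = mk and r(k−1) = v−1, with 1 < k ≤ v. If k/v = 1/⌊√m⌋, then v = k, v = k², or v = k(2k−1). -/
set_option maxHeartbeats 1000000 in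
theorem stmt_15 (v k r m : ℕ) (hv : 0 < v) (hr : 0 < r) (hm : 0 < m)
    (hk : 1 < k) (hkv : k ≤ v)
    (h1 : v * r = m * k) (h2 : r * (k - 1) = v - 1)
    (h : (k : ℝ) / v = 1 / (⌊Real.sqrt m⌋₊ : ℝ)) :
    v = k ∨ v = k ^ 2 ∨ v = k * (2 * k - 1) := by
  rw [Real.nat_floor_real_sqrt_eq_nat_sqrt] at h
  have hn1' : 0 < Nat.sqrt m := Nat.sqrt_pos.mpr hm
  have hmlt' : m < (Nat.sqrt m + 1) ^ 2 := by nlinarith [Nat.lt_succ_sqrt m]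
  obtain ⟨n, hn⟩ : ∃ n, Nat.sqrt m = n := ⟨_, rfl⟩
  rw [hn] at h hn1' hmlt'
  have hn1 : 0 < n := hn1'
  have hvkn : v = k * n := by
    have hv0 : (v:ℝ) ≠ 0 := Nat.cast_ne_zero.mpr hv.ne'
    have hn0 : (n:ℝ) ≠ 0 := Nat.cast_ne_zero.mpr hn1.ne'
    field_simp at h
    exact_mod_cast h.symm
  have hmlt : m < (n + 1) ^ 2 := hmlt'
  have hmrn : m = n * r := by
    have hh : k * n * r = m * k := by rw [← hvkn]; exact h1
    have hk0 : 0 < k := by omega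
    nlinarith
  -- key equation over ℤ
  have hkn1 : 1 ≤ k * n := by nlinarith
  have heq : (r:ℤ) * (k - 1) = k * n - 1 := by
    have h2' : r * (k - 1) = k * n - 1 := by rw [← hvkn]; exact h2
    zify [hk.le, hkn1] at h2'
    exact h2'
  have hmltZ : (m:ℤ) < (n + 1) ^ 2 := by exact_mod_cast hmlt
  have hmrnZ : (m:ℤ) = n * r := by exact_mod_cast hmrn
  have hkZ : (1:ℤ) < k := by exact_mod_cast hk
  have hnZ : (1:ℤ) ≤ n := by exact_mod_cast hn1
  -- n < 2k
  have hineq : (n:ℤ) * (k * n - 1) < (n + 1) ^ 2 * (k - 1) := by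
    calc (n:ℤ) * (k * n - 1) = m * (k - 1) := by
          rw [hmrnZ]; linear_combination (-(n:ℤ)) * heq
      _ < (n + 1) ^ 2 * (k - 1) := by
          apply mul_lt_mul_of_pos_right hmltZ; linarith
  have hn2k : (n:ℤ) < 2 * k := by nlinarith [sq_nonneg ((n:ℤ) - k)]
  -- divisibility
  obtain ⟨t, ht⟩ : ((k:ℤ) - 1) ∣ (n - 1) := ⟨r - n, by linear_combination -heq⟩
  have hkZ1 : (0:ℤ) < k - 1 := by linarith
  have ht0 : 0 ≤ t := by
    by_contra hc
    push_neg at hc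
    have h4 : (k - 1 : ℤ) * t < 0 := mul_neg_of_pos_of_neg hkZ1 hc
    linarith
  have ht2 : t ≤ 2 := by
    by_contra hc
    push_neg at hc
    have h3 : (k - 1 : ℤ) * 3 ≤ (k - 1) * t :=
      mul_le_mul_of_nonneg_left (by linarith) (by linarith)
    linarith
  interval_cases t
  · left
    have hne : n = 1 := by omega
    rw [hvkn, hne, mul_one]
  · right; left
    have hne : n = k := by omega
    rw [hvkn, hne, sq]
  · right; right
    have hne : n = 2 * k - 1 := by omega
    rw [hvkn, hne]
end
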